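/- arXiv:math-ph/0504034 — 5 statements merged into one kernel-verified Lean document; each statement's English description precedes it below -/
import Mathlib

section
/- Partition function of the two-matrix eigenvalue measure as a product of biorthogonality norms: if (π_j)_{0≤j≤N−1} and (σ_j)_{0≤j≤N−1} are monic polynomials with deg π_j = deg σ_j = j and there are complex numbers h_j with ∫∫_{ℝ²} π_j(x)·σ_k(y)·w(x,y) dx dy = h_j·δ_{jk} for all j,k ≤ N−1, then ∫_{ℝ^N×ℝ^N} Δ(x)·Δ(y)·∏_{i=1}^{N} w(x_i,y_i) dx dy = N! · ∏_{j=0}^{N−1} h_j. -/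
open MeasureTheory

/-- Vandermonde product `Δ(x) = ∏_{i<j} (x_j - x_i)`. -/
noncomputable def vand {n : ℕ} (x : Fin n → ℝ) : ℝ :=
  ∏ i : Fin n, ∏ j ∈ Finset.Ioi i, (x j - x i)

/-- The two-matrix model weight `w(x,y) = exp(-(N/T)(V₁(x)+V₂(y)-xy))`. -/
noncomputable def tmWeight (N : ℕ) (T : ℝ) (V₁ V₂ : Polynomial ℝ) (x y : ℝ) : ℝ :=
  Real.exp (-((N : ℝ) / T) * (V₁.eval x + V₂.eval y - x * y))

/-!
Andréief's identity: integrating `det [f j (x i)] * det [g k (x i)]` against `n` independent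
copies of a measure gives `n! * det [∫ f j * g k]`, because after expanding both determinants
every term factorises over the coordinates. Since `π j` and `σ j` are monic of degree `j`,
column operations turn the Vandermonde determinants into `det [π j (x i)]` and
`det [σ k (y i)]`, and the weights `w (x i, y i)` can be absorbed into the rows of the latter.
Biorthogonality makes the resulting Gram matrix diagonal with entries `h j`.
-/

open Matrix Finset Polynomial Equiv

theorem algebraMap_vand_eq_det_eval {R : Type*} [CommRing R] [Algebra ℝ R] {n : ℕ}
    (p : Fin n → R[X]) (hdeg : ∀ j, (p j).natDegree = j) (hmonic : ∀ j, (p j).Monic)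
    (x : Fin n → ℝ) :
    algebraMap ℝ R (vand x) = (of fun i j => (p j).eval (algebraMap ℝ R (x i))).det := by
  rw [← det_eval_matrixOfPolynomials_eq_det_vandermonde _ p hdeg hmonic, det_vandermonde, vand]
  simp only [map_prod, map_sub]

theorem integral_det_mul_det {ι α 𝕜 : Type*} [Fintype ι] [DecidableEq ι] [RCLike 𝕜]
    [MeasurableSpace α] (μ : Measure α) [SigmaFinite μ] (f g : ι → α → 𝕜)
    (hfg : ∀ j k, Integrable (fun a => f j a * g k a) μ) :
    (∫ x : ι → α, (of fun i j => f j (x i)).det * (of fun i k => g k (x i)).det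
        ∂Measure.pi fun _ => μ)
      = ((Fintype.card ι).factorial : 𝕜) * (of fun j k => ∫ a, f j a * g k a ∂μ).det := by
  set G : Matrix ι ι 𝕜 := of fun j k => ∫ a, f j a * g k a ∂μ
  let ε : Perm ι → 𝕜 := fun σ => ((Perm.sign σ : ℤ) : 𝕜)
  have expand : ∀ x : ι → α,
      (of fun i j => f j (x i)).det * (of fun i k => g k (x i)).det
        = ∑ σ : Perm ι, ∑ ρ : Perm ι, ε σ * ε ρ * ∏ i, f (σ i) (x i) * g (ρ i) (x i) := by
    intro x
    rw [← det_transpose, ← det_transpose (of _), det_apply', det_apply', sum_mul_sum]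
    simp only [transpose_apply, of_apply, prod_mul_distrib]
    exact sum_congr rfl fun σ _ => sum_congr rfl fun ρ _ => by ring
  have integrable_term : ∀ σ ρ : Perm ι,
      Integrable (fun x : ι → α => ε σ * ε ρ * ∏ i, f (σ i) (x i) * g (ρ i) (x i))
        (Measure.pi fun _ => μ) :=
    fun σ ρ => (Integrable.fintype_prod fun i => hfg (σ i) (ρ i)).const_mul _
  have sum_sign_mul_prod : ∀ σ : Perm ι, ∑ ρ : Perm ι, ε ρ * ∏ i, G (σ i) (ρ i) = ε σ * G.det := by
    intro σ
    rw [← det_permute, ← det_transpose, det_apply']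
    rfl
  have sign_mul_self : ∀ σ : Perm ι, ε σ * ε σ = 1 := fun σ => by
    simp only [ε, ← Int.cast_mul, ← Units.val_mul, Int.units_mul_self, Units.val_one, Int.cast_one]
  calc _ = ∑ σ : Perm ι, ∑ ρ : Perm ι, ε σ * ε ρ * ∏ i, G (σ i) (ρ i) := by
        simp_rw [expand]
        rw [integral_finsetSum _ fun σ _ => integrable_finsetSum _ fun ρ _ => integrable_term σ ρ]
        refine sum_congr rfl fun σ _ => ?_
        rw [integral_finsetSum _ fun ρ _ => integrable_term σ ρ]
        refine sum_congr rfl fun ρ _ => ?_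
        rw [integral_const_mul,
          integral_fintype_prod_eq_prod (f := fun i a => f (σ i) a * g (ρ i) a)]
        rfl
    _ = ∑ _σ : Perm ι, G.det := by
        refine sum_congr rfl fun σ _ => ?_
        simp_rw [mul_assoc, ← mul_sum, sum_sign_mul_prod, ← mul_assoc, sign_mul_self, one_mul]
    _ = _ := by rw [sum_const, card_univ, Fintype.card_perm, nsmul_eq_mul]

theorem integrable_eval_mul_exp_neg_mul_sq (P : ℂ[X]) {b : ℝ} (hb : 0 < b) :
    Integrable fun x : ℝ => P.eval (x : ℂ) * Real.exp (-b * x ^ 2) := by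
  simp_rw [eval_eq_sum_range, sum_mul]
  refine integrable_finsetSum _ fun i _ => ?_
  have h : Integrable fun x : ℝ => x ^ i * Real.exp (-b * x ^ 2) := by
    simpa [Real.rpow_natCast] using
      integrable_rpow_mul_exp_neg_mul_sq hb (s := i) (neg_one_lt_zero.trans_le i.cast_nonneg)
  simpa [mul_assoc] using h.ofReal.const_mul (P.coeff i)

theorem tmWeight_le {N : ℕ} {T c C : ℝ} {V₁ V₂ : ℝ[X]} (hNT : 0 ≤ (N : ℝ) / T)
    (hconf : ∀ x y : ℝ, c * (x ^ 2 + y ^ 2) - C ≤ V₁.eval x + V₂.eval y - x * y) (x y : ℝ) :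
    tmWeight N T V₁ V₂ x y ≤ Real.exp (N / T * C) *
      (Real.exp (-(N / T * c) * x ^ 2) * Real.exp (-(N / T * c) * y ^ 2)) := by
  rw [tmWeight, ← Real.exp_add, ← Real.exp_add, Real.exp_le_exp]
  nlinarith [mul_le_mul_of_nonneg_left (hconf x y) hNT]

theorem integrable_eval_mul_eval_mul_tmWeight {N : ℕ} {T : ℝ} (hN : 0 < N) (hT : 0 < T)
    {V₁ V₂ : ℝ[X]} (hconf : ∃ c > (0 : ℝ), ∃ C : ℝ, ∀ x y : ℝ,
      c * (x ^ 2 + y ^ 2) - C ≤ V₁.eval x + V₂.eval y - x * y) (P Q : ℂ[X]) :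
    Integrable fun p : ℝ × ℝ =>
      P.eval (p.1 : ℂ) * Q.eval (p.2 : ℂ) * (tmWeight N T V₁ V₂ p.1 p.2 : ℂ) := by
  obtain ⟨c, hc, C, hC⟩ := hconf
  have hNT : 0 < (N : ℝ) / T := by positivity
  have hb : 0 < N / T * c := mul_pos hNT hc
  have dominant := (((integrable_eval_mul_exp_neg_mul_sq P hb).norm.const_mul
    (Real.exp (N / T * C))).mul_prod (integrable_eval_mul_exp_neg_mul_sq Q hb).norm)
  refine dominant.mono' (by unfold tmWeight; fun_prop) (.of_forall fun p => ?_)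
  have hw : 0 ≤ tmWeight N T V₁ V₂ p.1 p.2 := (Real.exp_pos _).le
  rw [norm_mul, norm_mul, Complex.norm_real, Real.norm_of_nonneg hw]
  calc _ ≤ ‖P.eval (p.1 : ℂ)‖ * ‖Q.eval (p.2 : ℂ)‖ * (Real.exp (N / T * C) *
          (Real.exp (-(N / T * c) * p.1 ^ 2) * Real.exp (-(N / T * c) * p.2 ^ 2))) := by
        gcongr
        exact tmWeight_le hNT.le hC p.1 p.2
    _ = _ := by
        simp only [norm_mul, Complex.norm_real, Real.norm_of_nonneg (Real.exp_pos _).le]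
        ring

theorem partition_function_eq_product_of_norms_general
    (N : ℕ) (T : ℝ) (hT : 0 < T) (V₁ V₂ : Polynomial ℝ)
    (hconf : ∃ c > (0 : ℝ), ∃ C : ℝ, ∀ x y : ℝ,
      c * (x ^ 2 + y ^ 2) - C ≤ V₁.eval x + V₂.eval y - x * y)
    (π σ : Fin N → Polynomial ℂ) (h : Fin N → ℂ)
    (hπ : ∀ j : Fin N, (π j).Monic ∧ (π j).natDegree = (j : ℕ))
    (hσ : ∀ j : Fin N, (σ j).Monic ∧ (σ j).natDegree = (j : ℕ))
    (horth : ∀ j k : Fin N,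
      (∫ p : ℝ × ℝ, (π j).eval (p.1 : ℂ) * (σ k).eval (p.2 : ℂ) *
        (tmWeight N T V₁ V₂ p.1 p.2 : ℂ))
        = if j = k then h j else 0) :
    ((∫ p : (Fin N → ℝ) × (Fin N → ℝ),
        vand p.1 * vand p.2 * ∏ i, tmWeight N T V₁ V₂ (p.1 i) (p.2 i) : ℝ) : ℂ)
      = (N.factorial : ℂ) * ∏ j : Fin N, h j := by
  let w (p : ℝ × ℝ) : ℂ := tmWeight N T V₁ V₂ p.1 p.2
  have vand_eq_det (p : Fin N → ℂ[X]) (hp : ∀ j, (p j).Monic ∧ (p j).natDegree = j)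
      (x : Fin N → ℝ) : (vand x : ℂ) = (of fun i j => (p j).eval (x i : ℂ)).det := by
    simpa only [Complex.coe_algebraMap] using
      algebraMap_vand_eq_det_eval p (fun j => (hp j).2) (fun j => (hp j).1) x
  have gram : (of fun j k => ∫ p : ℝ × ℝ, (π j).eval (p.1 : ℂ) * (w p * (σ k).eval (p.2 : ℂ)))
      = diagonal h := by
    ext j k
    rw [of_apply, diagonal_apply, ← horth]
    exact integral_congr_ae (.of_forall fun p => by ring)
  calc _ = ∫ q : Fin N → ℝ × ℝ,
        ((vand (fun i => (q i).1) * vand (fun i => (q i).2) *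
          ∏ i, tmWeight N T V₁ V₂ (q i).1 (q i).2 : ℝ) : ℂ) := by
        rw [integral_complex_ofReal,
          ← (volume_measurePreserving_arrowProdEquivProdArrow ℝ ℝ (Fin N)).integral_comp']
        rfl
    _ = ∫ q : Fin N → ℝ × ℝ, (of fun i j => (π j).eval ((q i).1 : ℂ)).det *
          (of fun i k => w (q i) * (σ k).eval ((q i).2 : ℂ)).det := by
        congr 1 with q
        have scale_rows :=
          det_mul_column (fun i => w (q i)) (of fun i k => (σ k).eval ((q i).2 : ℂ))
        simp only [of_apply] at scale_rows
        rw [scale_rows, ← vand_eq_det π hπ, ← vand_eq_det σ hσ]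
        push_cast
        ring
    _ = N.factorial * (of fun j k => ∫ p : ℝ × ℝ,
          (π j).eval (p.1 : ℂ) * (w p * (σ k).eval (p.2 : ℂ))).det := by
        have andreief := integral_det_mul_det volume (fun j p => (π j).eval (p.1 : ℂ))
          (fun k p => w p * (σ k).eval (p.2 : ℂ)) fun j k =>
          (integrable_eval_mul_eval_mul_tmWeight j.pos hT hconf (π j) (σ k)).congr
            (.of_forall fun p => by ring)
        rwa [Fintype.card_fin] at andreief
    _ = _ := by rw [gram, det_diagonal]

theorem partition_function_eq_product_of_norms
    (N : ℕ) (hN : 1 ≤ N) (T : ℝ) (hT : 0 < T) (V₁ V₂ : Polynomial ℝ)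
    (hconf : ∃ c > (0 : ℝ), ∃ C : ℝ, ∀ x y : ℝ,
      c * (x ^ 2 + y ^ 2) - C ≤ V₁.eval x + V₂.eval y - x * y)
    (π σ : Fin N → Polynomial ℂ) (h : Fin N → ℂ)
    (hπ : ∀ j : Fin N, (π j).Monic ∧ (π j).natDegree = (j : ℕ))
    (hσ : ∀ j : Fin N, (σ j).Monic ∧ (σ j).natDegree = (j : ℕ))
    (horth : ∀ j k : Fin N,
      (∫ p : ℝ × ℝ, (π j).eval (p.1 : ℂ) * (σ k).eval (p.2 : ℂ) *
        (tmWeight N T V₁ V₂ p.1 p.2 : ℂ))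
        = if j = k then h j else 0) :
    ((∫ p : (Fin N → ℝ) × (Fin N → ℝ),
        vand p.1 * vand p.2 * ∏ i, tmWeight N T V₁ V₂ (p.1 i) (p.2 i) : ℝ) : ℂ)
      = (N.factorial : ℂ) * ∏ j : Fin N, h j :=
  partition_function_eq_product_of_norms_general N T hT V₁ V₂ hconf π σ h hπ hσ horth
end

section
/- Generalized Christoffel–Darboux theorem: let x, x′ ∈ ℂ and let u, v : ℕ → ℂ satisfy the recurrences x·u_i = Σ_{m=0}^{i+1} Q(i,m)·u_m for all i and x′·v_j = Σ_{i=0}^{j+d} Q(i,j)·v_i for all j. Then for every n ≥ d: (x′ − x) · Σ_{j=0}^{n−1} u_j·v_j = Σ_{i=n}^{n+d−1} Σ_{j=n−d}^{n−1} Q(i,j)·u_j·v_i − Q(n−1,n)·u_n·v_{n−1}; in particular the right-hand side is exactly Σ_{i,j} A_n(i,j)·u_j·v_i, so the Christoffel–Darboux sum is carried by the finite window given by the commutator A_n := [Q, Π_{n−1}]. -/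
/-- The Christoffel–Darboux matrix `A_n = [Q, Π_{n-1}]`, entrywise
`A_n(i,j) = Q(i,j)·(𝟙[j ≤ n−1] − 𝟙[i ≤ n−1])`. -/
noncomputable def Amat (Q : ℕ → ℕ → ℂ) (n i j : ℕ) : ℂ :=
  Q i j * ((if j ≤ n - 1 then (1 : ℂ) else 0) - if i ≤ n - 1 then (1 : ℂ) else 0)

/-!
Weight the double sum `∑ Q(i,j) u_j v_i` with the entries of `[Q, Π]`, `Π` the projection onto
`{0, …, n-1}`. Summing the column weights `𝟙[j < n]` first and using the recurrence for `v`, and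
the row weights `𝟙[i < n]` first and using the one for `u`, gives `(x' - x) ∑_{j<n} u_j v_j`.
On the other hand the block inside `Π × Π` cancels, and by the band structure only the window
`[n, n+d) × [n-d, n)` survives below the diagonal and only the corner `(n-1, n)` above it.
-/

open Finset

section Commutator

variable {ι R : Type*} [DecidableEq ι] [CommRing R] (F : ι → ι → R) {s t : Finset ι}

theorem sum_sum_mul_ite_mem_sub_ite_mem (hst : s ⊆ t) :
    ∑ i ∈ t, ∑ j ∈ t, F i j * ((if j ∈ s then 1 else 0) - if i ∈ s then 1 else 0) =
      ∑ j ∈ s, ∑ i ∈ t, F i j - ∑ i ∈ s, ∑ j ∈ t, F i j := by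
  have hts : t ∩ s = s := inter_eq_right.2 hst
  simp only [mul_sub, mul_ite, mul_one, mul_zero, sum_sub_distrib, sum_ite_mem, hts,
    sum_ite_irrel, sum_const_zero]
  rw [sum_comm]

theorem sum_sum_sub_sum_sum_eq_sdiff (hst : s ⊆ t) :
    ∑ j ∈ s, ∑ i ∈ t, F i j - ∑ i ∈ s, ∑ j ∈ t, F i j =
      ∑ i ∈ t \ s, ∑ j ∈ s, F i j - ∑ i ∈ s, ∑ j ∈ t \ s, F i j := by
  simp only [← sum_sdiff hst, sum_add_distrib]
  rw [sum_comm (s := s) (t := t \ s), sum_comm (s := s) (t := s)]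
  ring

end Commutator

theorem Amat_eq {Q : ℕ → ℕ → ℂ} {n : ℕ} (hn : 1 ≤ n) (i j : ℕ) :
    Amat Q n i j =
      Q i j * ((if j ∈ range n then 1 else 0) - if i ∈ range n then 1 else 0) := by
  simp only [Amat, mem_range, Nat.le_sub_one_iff_lt hn]

section Band

variable {R : Type*} [CommRing R] {d : ℕ}

theorem sum_sum_sub_sum_sum_eq_sub_mul_sum {Q : ℕ → ℕ → R}
    (hup : ∀ i j, i + 1 < j → Q i j = 0) (hlow : ∀ i j, j + d < i → Q i j = 0)
    {x x' : R} {u v : ℕ → R}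
    (hu : ∀ i, x * u i = ∑ m ∈ range (i + 2), Q i m * u m)
    (hv : ∀ j, x' * v j = ∑ i ∈ range (j + d + 1), Q i j * v i)
    (hd : 1 ≤ d) {n N : ℕ} (hnN : n + d ≤ N) :
    ∑ j ∈ range n, ∑ i ∈ range N, Q i j * u j * v i -
        ∑ i ∈ range n, ∑ j ∈ range N, Q i j * u j * v i =
      (x' - x) * ∑ j ∈ range n, u j * v j := by
  have hcol : ∀ j ∈ range n, ∑ i ∈ range N, Q i j * u j * v i = x' * v j * u j := by
    intro j hj
    have hjN : j + d + 1 ≤ N := by have := mem_range.1 hj; omega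
    calc ∑ i ∈ range N, Q i j * u j * v i = (∑ i ∈ range N, Q i j * v i) * u j := by
          rw [sum_mul]; exact sum_congr rfl fun i _ => by ring
      _ = x' * v j * u j := by
          rw [eventually_constant_sum (fun i hi => by rw [hlow i j (by omega), zero_mul]) hjN,
            hv]
  have hrow : ∀ i ∈ range n, ∑ j ∈ range N, Q i j * u j * v i = x * u i * v i := by
    intro i hi
    have hiN : i + 2 ≤ N := by have := mem_range.1 hi; omega
    rw [← sum_mul, eventually_constant_sum
      (fun j hj => by rw [hup i j (by omega), zero_mul]) hiN, hu]
  rw [sum_congr rfl hcol, sum_congr rfl hrow, ← sum_sub_distrib, mul_sum]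
  exact sum_congr rfl fun j _ => by ring

variable {F : ℕ → ℕ → R} {n N : ℕ}

theorem sum_Ico_sum_range_eq_sum_Icc (hF : ∀ i j, j + d < i → F i j = 0) (hn : 1 ≤ n) :
    ∑ i ∈ Ico n N, ∑ j ∈ range n, F i j = ∑ i ∈ Ico n N, ∑ j ∈ Icc (n - d) (n - 1), F i j := by
  refine sum_congr rfl fun i hi => (sum_subset (fun j hj => ?_) fun j hj hj' => ?_).symm
  · simp only [mem_Icc, mem_range] at hj ⊢; omega
  · simp only [mem_Icc, mem_range, mem_Ico, not_and, not_le] at hi hj hj'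
    exact hF i j (by omega)

theorem sum_range_sum_Ico_eq_corner (hF : ∀ i j, i + 1 < j → F i j = 0) (hn : 1 ≤ n)
    (hnN : n < N) :
    ∑ i ∈ range n, ∑ j ∈ Ico n N, F i j = F (n - 1) n := by
  rw [sum_eq_single_of_mem (n - 1) (mem_range.2 (by omega)) fun i hi hin =>
      sum_eq_zero fun j hj => hF i j (by simp only [mem_range, mem_Ico] at hi hj; omega),
    sum_eq_single_of_mem n (mem_Ico.2 ⟨le_rfl, hnN⟩) fun j hj hjn =>
      hF (n - 1) j (by simp only [mem_Ico] at hj; omega)]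

end Band

theorem generalized_christoffel_darboux
    (d : ℕ) (hd : 1 ≤ d) (Q : ℕ → ℕ → ℂ)
    (hband : ∀ i j, (i + 1 < j ∨ j + d < i) → Q i j = 0)
    (x x' : ℂ) (u v : ℕ → ℂ)
    (hu : ∀ i, x * u i = ∑ m ∈ Finset.range (i + 2), Q i m * u m)
    (hv : ∀ j, x' * v j = ∑ i ∈ Finset.range (j + d + 1), Q i j * v i)
    (n : ℕ) (hn : d ≤ n) :
    (x' - x) * (∑ j ∈ Finset.range n, u j * v j) =
      (∑ i ∈ Finset.Icc n (n + d - 1), ∑ j ∈ Finset.Icc (n - d) (n - 1), Q i j * u j * v i)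
        - Q (n - 1) n * u n * v (n - 1) ∧
    (∑ i ∈ Finset.range (n + d), ∑ j ∈ Finset.range (n + d), Amat Q n i j * u j * v i) =
      (∑ i ∈ Finset.Icc n (n + d - 1), ∑ j ∈ Finset.Icc (n - d) (n - 1), Q i j * u j * v i)
        - Q (n - 1) n * u n * v (n - 1) := by
  have hn1 : 1 ≤ n := hd.trans hn
  have hup : ∀ i j, i + 1 < j → Q i j = 0 := fun i j h => hband i j (Or.inl h)
  have hlow : ∀ i j, j + d < i → Q i j = 0 := fun i j h => hband i j (Or.inr h)
  have hsub : range n ⊆ range (n + d) := range_subset_range.2 (Nat.le_add_right n d)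
  have hsdiff : range (n + d) \ range n = Ico n (n + d) := by
    ext i; simp only [mem_sdiff, mem_range, mem_Ico]; omega
  have hIco : Ico n (n + d) = Icc n (n + d - 1) := by
    ext i; simp only [mem_Ico, mem_Icc]; omega
  set F : ℕ → ℕ → ℂ := fun i j => Q i j * u j * v i
  have hA : ∑ i ∈ range (n + d), ∑ j ∈ range (n + d), Amat Q n i j * u j * v i =
      ∑ i ∈ range (n + d), ∑ j ∈ range (n + d),
        F i j * ((if j ∈ range n then 1 else 0) - if i ∈ range n then 1 else 0) :=
    sum_congr rfl fun i _ => sum_congr rfl fun j _ => by rw [Amat_eq hn1]; ring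
  have hwindow := sum_Ico_sum_range_eq_sum_Icc (N := n + d) (F := F) (d := d)
    (fun i j h => by simp only [F, hlow i j h, zero_mul]) hn1
  have hcorner := sum_range_sum_Ico_eq_corner (N := n + d) (F := F)
    (fun i j h => by simp only [F, hup i j h, zero_mul]) hn1 (by omega)
  have hAmat : ∑ i ∈ range (n + d), ∑ j ∈ range (n + d), Amat Q n i j * u j * v i =
      (∑ i ∈ Icc n (n + d - 1), ∑ j ∈ Icc (n - d) (n - 1), Q i j * u j * v i)
        - Q (n - 1) n * u n * v (n - 1) := by
    rw [hA, sum_sum_mul_ite_mem_sub_ite_mem F hsub, sum_sum_sub_sum_sum_eq_sdiff F hsub, hsdiff,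
      hwindow, hcorner, hIco]
  refine ⟨?_, hAmat⟩
  rw [← hAmat, hA, sum_sum_mul_ite_mem_sub_ite_mem F hsub,
    sum_sum_sub_sum_sum_eq_sub_mul_sum hup hlow hu hv hd le_rfl]
end

section
/- Christoffel–Darboux relation with a derivative (corollary of the generalized Christoffel–Darboux theorem): let x ∈ ℂ, c ∈ ℂ with c ≠ 0, let u : ℕ → ℂ satisfy x·u_i = Σ_{m=0}^{i+1} Q(i,m)·u_m for all i, and let v_j : ℝ → ℂ (j ∈ ℕ) be differentiable functions satisfying −c·v_j′(y) = Σ_{i=0}^{j+d} Q(i,j)·v_i(y) for all j and all y ∈ ℝ. Then for every n ≥ d and all y ∈ ℝ: x·Σ_{j=0}^{n−1} u_j·v_j(y) + c·Σ_{j=0}^{n−1} u_j·v_j′(y) = −( Σ_{i=n}^{n+d−1} Σ_{j=n−d}^{n−1} Q(i,j)·u_j·v_i(y) − Q(n−1,n)·u_n·v_{n−1}(y) ). -/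
theorem christoffel_darboux_with_derivative
    (d : ℕ) (hd : 1 ≤ d) (Q : ℕ → ℕ → ℂ)
    (hband : ∀ i j, (i + 1 < j ∨ j + d < i) → Q i j = 0)
    (x c : ℂ) (hc : c ≠ 0)
    (u : ℕ → ℂ)
    (hu : ∀ i, x * u i = ∑ m ∈ Finset.range (i + 2), Q i m * u m)
    (v : ℕ → ℝ → ℂ)
    (hvdiff : ∀ j, Differentiable ℝ (v j))
    (hv : ∀ j (y : ℝ), -c * deriv (v j) y = ∑ i ∈ Finset.range (j + d + 1), Q i j * v i y)
    (n : ℕ) (hn : d ≤ n) (y : ℝ) :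
    x * (∑ j ∈ Finset.range n, u j * v j y) + c * (∑ j ∈ Finset.range n, u j * deriv (v j) y) =
      -((∑ i ∈ Finset.Icc n (n + d - 1), ∑ j ∈ Finset.Icc (n - d) (n - 1), Q i j * u j * v i y)
          - Q (n - 1) n * u n * v (n - 1) y) := by
  set N := n + d + 1 with hN
  set g : ℕ → ℕ → ℂ := fun i j => Q i j * u j * v i y with hg
  have hv' : ∀ j, c * deriv (v j) y = -∑ i ∈ Finset.range (j + d + 1), Q i j * v i y := by
    intro j; linear_combination -(hv j y)
  have step1 : x * (∑ j ∈ Finset.range n, u j * v j y)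
      + c * (∑ j ∈ Finset.range n, u j * deriv (v j) y)
      = ∑ j ∈ Finset.range n,
          ((∑ m ∈ Finset.range (j + 2), g j m) - ∑ i ∈ Finset.range (j + d + 1), g i j) := by
    rw [Finset.mul_sum, Finset.mul_sum, ← Finset.sum_add_distrib]
    refine Finset.sum_congr rfl fun j hj => ?_
    have e1 : ∑ m ∈ Finset.range (j + 2), g j m
        = (∑ m ∈ Finset.range (j + 2), Q j m * u m) * v j y := by
      rw [Finset.sum_mul]
    have e2 : ∑ i ∈ Finset.range (j + d + 1), g i j
        = u j * ∑ i ∈ Finset.range (j + d + 1), Q i j * v i y := by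
      rw [Finset.mul_sum]; exact Finset.sum_congr rfl fun i _ => by simp [hg]; ring
    rw [e1, e2, ← hu j]
    linear_combination u j * hv' j
  have step2 : ∀ j ∈ Finset.range n,
      ∑ m ∈ Finset.range (j + 2), g j m = ∑ m ∈ Finset.range N, g j m := by
    intro j hj
    have hj' := Finset.mem_range.1 hj
    apply Finset.sum_subset
    · exact Finset.range_subset_range.2 (by omega)
    · intro m _ hm
      have hm' : j + 1 < m := by
        by_contra h
        exact hm (Finset.mem_range.2 (by omega))
      simp [hg, hband j m (Or.inl hm')]
  have step3 : ∀ j ∈ Finset.range n,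
      ∑ i ∈ Finset.range (j + d + 1), g i j = ∑ i ∈ Finset.range N, g i j := by
    intro j hj
    have hj' := Finset.mem_range.1 hj
    apply Finset.sum_subset
    · exact Finset.range_subset_range.2 (by omega)
    · intro i _ hi
      have hi' : j + d < i := by
        by_contra h
        exact hi (Finset.mem_range.2 (by omega))
      simp [hg, hband i j (Or.inr hi')]
  have step4 : ∑ j ∈ Finset.range n,
        ((∑ m ∈ Finset.range (j + 2), g j m) - ∑ i ∈ Finset.range (j + d + 1), g i j)
      = (∑ i ∈ Finset.range n, ∑ j ∈ Finset.range N, g i j)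
        - ∑ i ∈ Finset.range N, ∑ j ∈ Finset.range n, g i j := by
    rw [Finset.sum_sub_distrib]
    congr 1
    · exact Finset.sum_congr rfl step2
    · calc ∑ j ∈ Finset.range n, ∑ i ∈ Finset.range (j + d + 1), g i j
          = ∑ j ∈ Finset.range n, ∑ i ∈ Finset.range N, g i j :=
            Finset.sum_congr rfl step3
        _ = _ := Finset.sum_comm
  have split : ∀ F : ℕ → ℂ,
      ∑ k ∈ Finset.range N, F k = (∑ k ∈ Finset.range n, F k) + ∑ k ∈ Finset.Ico n N, F k := by
    intro F
    simp only [Finset.range_eq_Ico]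
    exact (Finset.sum_Ico_consecutive _ (Nat.zero_le n) (by omega)).symm
  have hA : ∑ i ∈ Finset.range n, ∑ j ∈ Finset.Ico n N, g i j = g (n - 1) n := by
    rw [Finset.sum_eq_single (n - 1)]
    · rw [Finset.sum_eq_single n]
      · intro b hb hbn
        have hb' := Finset.mem_Ico.1 hb
        simp [hg, hband (n - 1) b (Or.inl (by omega))]
      · intro h
        exact absurd (Finset.mem_Ico.2 ⟨le_refl n, by omega⟩) h
    · intro b hb hbn
      apply Finset.sum_eq_zero
      intro j hj
      have hb' := Finset.mem_range.1 hb
      have hj' := Finset.mem_Ico.1 hj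
      simp [hg, hband b j (Or.inl (by omega))]
    · intro h
      exact absurd (Finset.mem_range.2 (by omega)) h
  have hB : ∑ i ∈ Finset.Ico n N, ∑ j ∈ Finset.range n, g i j
      = ∑ i ∈ Finset.Icc n (n + d - 1), ∑ j ∈ Finset.Icc (n - d) (n - 1), g i j := by
    have inner_eq : ∀ i ∈ Finset.Ico n N,
        ∑ j ∈ Finset.range n, g i j = ∑ j ∈ Finset.Icc (n - d) (n - 1), g i j := by
      intro i hi
      have hi' := Finset.mem_Ico.1 hi
      symm
      apply Finset.sum_subset
      · intro j hj
        have := Finset.mem_Icc.1 hj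
        exact Finset.mem_range.2 (by omega)
      · intro j hj hj'
        have hj1 := Finset.mem_range.1 hj
        have hj2 : ¬(n - d ≤ j ∧ j ≤ n - 1) := by simpa [Finset.mem_Icc] using hj'
        simp [hg, hband i j (Or.inr (by omega))]
    calc ∑ i ∈ Finset.Ico n N, ∑ j ∈ Finset.range n, g i j
        = ∑ i ∈ Finset.Ico n N, ∑ j ∈ Finset.Icc (n - d) (n - 1), g i j :=
          Finset.sum_congr rfl inner_eq
      _ = ∑ i ∈ Finset.Icc n (n + d - 1), ∑ j ∈ Finset.Icc (n - d) (n - 1), g i j := by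
          symm
          apply Finset.sum_subset
          · intro i hi
            have := Finset.mem_Icc.1 hi
            exact Finset.mem_Ico.2 (by omega)
          · intro i hi hi'
            apply Finset.sum_eq_zero
            intro j hj
            have h1 := Finset.mem_Ico.1 hi
            have h2 := Finset.mem_Icc.1 hj
            have h3 : ¬(n ≤ i ∧ i ≤ n + d - 1) := by simpa [Finset.mem_Icc] using hi'
            simp [hg, hband i j (Or.inr (by omega))]
  have final : (∑ i ∈ Finset.range n, ∑ j ∈ Finset.range N, g i j)
      - ∑ i ∈ Finset.range N, ∑ j ∈ Finset.range n, g i j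
      = g (n - 1) n - ∑ i ∈ Finset.Icc n (n + d - 1), ∑ j ∈ Finset.Icc (n - d) (n - 1), g i j := by
    have e1 : ∀ i, ∑ j ∈ Finset.range N, g i j
        = (∑ j ∈ Finset.range n, g i j) + ∑ j ∈ Finset.Ico n N, g i j := fun i => split _
    have e2 : ∑ i ∈ Finset.range N, ∑ j ∈ Finset.range n, g i j
        = (∑ i ∈ Finset.range n, ∑ j ∈ Finset.range n, g i j)
          + ∑ i ∈ Finset.Ico n N, ∑ j ∈ Finset.range n, g i j := split _
    simp only [e1, Finset.sum_add_distrib, e2]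
    rw [hA, hB]
    ring
  rw [step1, step4, final]
  simp only [hg]
  ring
end

section
/- Structure of the Christoffel–Darboux matrix: for every n ≥ d, the commutator A_n := [Q, Π_{n−1}] satisfies: A_n(i,j) = Q(i,j) if n ≤ i ≤ n+d−1 and n−d ≤ j ≤ n−1; A_n(n−1, n) = −Q(n−1, n); and A_n(i,j) = 0 for every other pair (i,j). In particular A_n has only one nonzero block of size at most (d+1)×(d+1). -/
theorem christoffel_darboux_matrix_structure
    (d : ℕ) (hd : 1 ≤ d) (Q : ℕ → ℕ → ℂ)
    (hband : ∀ i j, (i + 1 < j ∨ j + d < i) → Q i j = 0)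
    (n : ℕ) (hn : d ≤ n) :
    (∀ i j, n ≤ i → i ≤ n + d - 1 → n - d ≤ j → j ≤ n - 1 → Amat Q n i j = Q i j) ∧
    Amat Q n (n - 1) n = -Q (n - 1) n ∧
    (∀ i j, ¬(n ≤ i ∧ i ≤ n + d - 1 ∧ n - d ≤ j ∧ j ≤ n - 1) → ¬(i = n - 1 ∧ j = n) →
      Amat Q n i j = 0) := by
  refine ⟨?_, ?_, ?_⟩
  · intro i j hi hi' hj hj'
    simp only [Amat, if_pos hj', if_neg (by omega : ¬ i ≤ n - 1)]
    ring
  · simp only [Amat, if_pos (le_refl (n-1)), if_neg (by omega : ¬ n ≤ n - 1)]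
    ring
  · intro i j hblock hcorner
    by_cases hi : i ≤ n - 1 <;> by_cases hj : j ≤ n - 1
    · simp [Amat, hi, hj]
    · -- i ≤ n-1 < j, so j ≥ n > i
      have hq : Q i j = 0 := by
        rcases lt_or_ge (i+1) j with h | h
        · exact hband i j (Or.inl h)
        · exact absurd ⟨by omega, by omega⟩ hcorner
      simp [Amat, hq]
    · have hq : Q i j = 0 := by
        rcases lt_or_ge j (n - d) with h | h
        · exact hband i j (Or.inr (by omega))
        · rcases lt_or_ge (n + d - 1) i with h2 | h2
          · exact hband i j (Or.inr (by omega))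
          · exact absurd ⟨by omega, h2, h, hj⟩ hblock
      simp [Amat, hq]
    · simp [Amat, hi, hj]
end

section
/- Existence of the finite differential system for a window of wave functions: assume Q(m, m+1) ≠ 0 for all m and Q(m, m−d₂) ≠ 0 for all m ≥ d₂. Then for every n ≥ d₂ + 1 there exists a (d₂+1)×(d₂+1) matrix D of polynomials in one variable with complex coefficients, each entry of degree at most d₁, such that for every family of differentiable functions ψ_j : ℝ → ℂ (j ∈ ℕ) satisfying, for all j and all x, the recurrences x·ψ_j(x) = Σ_{m=0}^{j+1} Q(j,m)·ψ_m(x) and −c·ψ_j′(x) = Σ_{i=0}^{j+d₁} P(i,j)·ψ_i(x), one has for all x and all 0 ≤ a ≤ d₂: −c·ψ_{n−d₂+a}′(x) = Σ_{b=0}^{d₂} D(a,b)(x) · ψ_{n−d₂+b}(x). The matrix D depends only on Q, P, c, n and not on the family ψ. -/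
noncomputable def winV (d₂ n : ℕ) (Q : ℕ → ℕ → ℂ) : ℕ → Fin (d₂ + 1) → Polynomial ℂ
  | k =>
    if h : k ≤ d₂ then fun b => if (b : ℕ) = k then 1 else 0
    else fun b =>
      Polynomial.C (Q (n - d₂ + (k - 1)) (n - d₂ + k))⁻¹ *
        (Polynomial.X * winV d₂ n Q (k - 1) b -
          ∑ s : Fin (d₂ + 1),
            Polynomial.C (Q (n - d₂ + (k - 1)) (n - d₂ + (k - 1 - d₂ + (s : ℕ)))) *
              winV d₂ n Q (k - 1 - d₂ + (s : ℕ)) b)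
  termination_by k => k
  decreasing_by
  · omega
  · have := s.isLt; omega

lemma winV_natDegree (d₂ n : ℕ) (Q : ℕ → ℕ → ℂ) :
    ∀ k b, (winV d₂ n Q k b).natDegree ≤ k - d₂ := by
  intro k
  induction k using Nat.strong_induction_on with
  | _ k ih =>
    intro b
    rw [winV]
    split
    · dsimp only; split <;> simp
    · next h =>
      refine le_trans (Polynomial.natDegree_C_mul_le _ _) ?_
      refine le_trans (Polynomial.natDegree_sub_le _ _) ?_
      apply max_le
      · refine le_trans (Polynomial.natDegree_mul_le) ?_
        have := ih (k - 1) (by omega) b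
        simp only [Polynomial.natDegree_X]
        omega
      · apply Polynomial.natDegree_sum_le_of_forall_le
        intro s _
        refine le_trans (Polynomial.natDegree_C_mul_le _ _) ?_
        have h2 := ih (k - 1 - d₂ + (s : ℕ)) (by have := s.isLt; omega) b
        have := s.isLt
        omega

lemma band_sum (d₂ : ℕ) (Q : ℕ → ℕ → ℂ)
    (hQband : ∀ i j, (i + 1 < j ∨ j + d₂ < i) → Q i j = 0)
    (ψ : ℕ → ℝ → ℂ) (j : ℕ) (hj : d₂ ≤ j) (t : ℝ) :
    ∑ m ∈ Finset.range (j + 2), Q j m * ψ m t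
      = ∑ s ∈ Finset.range (d₂ + 2), Q j (j - d₂ + s) * ψ (j - d₂ + s) t := by
  have hba : (j + 2) - (j - d₂) = d₂ + 2 := by omega
  rw [← hba, ← Finset.sum_Ico_eq_sum_range (fun x => Q j x * ψ x t) (j - d₂) (j + 2)]
  symm
  apply Finset.sum_subset
  · intro x hx
    simp only [Finset.mem_Ico, Finset.mem_range] at *
    omega
  · intro x hx hnx
    simp only [Finset.mem_Ico, Finset.mem_range] at *
    have : Q j x = 0 := hQband j x (by omega)
    simp [this]

lemma winV_spec (d₂ n : ℕ) (Q : ℕ → ℕ → ℂ) (hn : d₂ + 1 ≤ n)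
    (hQband : ∀ i j, (i + 1 < j ∨ j + d₂ < i) → Q i j = 0)
    (hQsup : ∀ m, Q m (m + 1) ≠ 0)
    (ψ : ℕ → ℝ → ℂ)
    (hrec : ∀ j (t : ℝ), (t : ℂ) * ψ j t = ∑ m ∈ Finset.range (j + 2), Q j m * ψ m t) :
    ∀ k (t : ℝ), ψ (n - d₂ + k) t
      = ∑ b : Fin (d₂ + 1), (winV d₂ n Q k b).eval (t : ℂ) * ψ (n - d₂ + (b : ℕ)) t := by
  intro k
  induction k using Nat.strong_induction_on with
  | _ k ih =>
    intro t
    by_cases h : k ≤ d₂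
    · rw [winV]
      simp only [dif_pos h]
      have hbe : ∀ b : Fin (d₂ + 1),
          Polynomial.eval (t : ℂ) (if (b : ℕ) = k then (1 : Polynomial ℂ) else 0)
            = if b = (⟨k, by omega⟩ : Fin (d₂ + 1)) then 1 else 0 := by
        intro b
        by_cases hb : (b : ℕ) = k
        · simp [hb, Fin.ext_iff]
        · simp [hb, Fin.ext_iff]
      simp only [hbe, ite_mul, one_mul, zero_mul, Finset.sum_ite_eq', Finset.mem_univ, if_true]
    · -- inductive step
      have hk : d₂ < k := by omega
      have hq : Q (n - d₂ + (k - 1)) (n - d₂ + k) ≠ 0 := by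
        have := hQsup (n - d₂ + (k - 1))
        have e : n - d₂ + (k - 1) + 1 = n - d₂ + k := by omega
        rwa [e] at this
      have key : (t : ℂ) * ψ (n - d₂ + (k - 1)) t
          = (∑ s : Fin (d₂ + 1), Q (n - d₂ + (k - 1)) (n - d₂ + (k - 1 - d₂ + (s : ℕ)))
              * ψ (n - d₂ + (k - 1 - d₂ + (s : ℕ))) t)
            + Q (n - d₂ + (k - 1)) (n - d₂ + k) * ψ (n - d₂ + k) t := by
        rw [hrec (n - d₂ + (k - 1)) t,
          band_sum d₂ Q hQband ψ (n - d₂ + (k - 1)) (by omega) t,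
          Finset.sum_range_succ]
        have e1 : n - d₂ + (k - 1) - d₂ + (d₂ + 1) = n - d₂ + k := by omega
        rw [e1]
        congr 1
        rw [Finset.sum_range]
        apply Finset.sum_congr rfl
        intro s _
        have e2 : n - d₂ + (k - 1) - d₂ + (s : ℕ) = n - d₂ + (k - 1 - d₂ + (s : ℕ)) := by
          have := s.isLt; omega
        rw [e2]
      have heval : ∀ b : Fin (d₂ + 1), (winV d₂ n Q k b).eval (t : ℂ)
          = (Q (n - d₂ + (k - 1)) (n - d₂ + k))⁻¹ *
              ((t : ℂ) * (winV d₂ n Q (k - 1) b).eval (t : ℂ) -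
                ∑ s : Fin (d₂ + 1), Q (n - d₂ + (k - 1)) (n - d₂ + (k - 1 - d₂ + (s : ℕ)))
                  * (winV d₂ n Q (k - 1 - d₂ + (s : ℕ)) b).eval (t : ℂ)) := by
        intro b
        conv_lhs => rw [winV]
        simp only [dif_neg h]
        simp [Polynomial.eval_finset_sum]
      apply mul_left_cancel₀ hq
      have step1 : Q (n - d₂ + (k - 1)) (n - d₂ + k) * ψ (n - d₂ + k) t
          = (t : ℂ) * ψ (n - d₂ + (k - 1)) t
            - ∑ s : Fin (d₂ + 1), Q (n - d₂ + (k - 1)) (n - d₂ + (k - 1 - d₂ + (s : ℕ)))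
                * ψ (n - d₂ + (k - 1 - d₂ + (s : ℕ))) t := by
        linear_combination -key
      rw [step1]
      have hcancel : ∀ x y : ℂ,
          Q (n - d₂ + (k - 1)) (n - d₂ + k) *
            ((Q (n - d₂ + (k - 1)) (n - d₂ + k))⁻¹ * x * y) = x * y := by
        intro x y
        rw [← mul_assoc, ← mul_assoc, mul_inv_cancel₀ hq, one_mul]
      conv_rhs => rw [Finset.mul_sum]
      simp only [heval, hcancel]
      rw [ih (k - 1) (by omega) t]
      have ihs : ∀ s : Fin (d₂ + 1), ψ (n - d₂ + (k - 1 - d₂ + (s : ℕ))) t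
          = ∑ b : Fin (d₂ + 1), (winV d₂ n Q (k - 1 - d₂ + (s : ℕ)) b).eval (t : ℂ)
              * ψ (n - d₂ + (b : ℕ)) t := by
        intro s
        exact ih (k - 1 - d₂ + (s : ℕ)) (by have := s.isLt; omega) t
      simp only [ihs]
      simp only [sub_mul, Finset.sum_sub_distrib, Finset.sum_mul, Finset.mul_sum, mul_assoc]
      rw [Finset.sum_comm]

noncomputable def winL (d₂ n : ℕ) (Q : ℕ → ℕ → ℂ) (b : Fin (d₂ + 1)) : Polynomial ℂ :=
  Polynomial.C (Q (n - 1) (n - d₂ - 1))⁻¹ *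
    ((if (b : ℕ) = d₂ - 1 then Polynomial.X else 0) -
      Polynomial.C (Q (n - 1) (n - d₂ + (b : ℕ))))

lemma winL_natDegree (d₂ n : ℕ) (Q : ℕ → ℕ → ℂ) (b : Fin (d₂ + 1)) :
    (winL d₂ n Q b).natDegree ≤ 1 := by
  refine le_trans (Polynomial.natDegree_C_mul_le _ _) ?_
  refine le_trans (Polynomial.natDegree_sub_le _ _) ?_
  apply max_le
  · split <;> simp
  · simp

lemma winL_spec (d₂ n : ℕ) (Q : ℕ → ℕ → ℂ) (hd₂ : 1 ≤ d₂) (hn : d₂ + 1 ≤ n)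
    (hQband : ∀ i j, (i + 1 < j ∨ j + d₂ < i) → Q i j = 0)
    (hQsub : ∀ m, d₂ ≤ m → Q m (m - d₂) ≠ 0)
    (ψ : ℕ → ℝ → ℂ)
    (hrec : ∀ j (t : ℝ), (t : ℂ) * ψ j t = ∑ m ∈ Finset.range (j + 2), Q j m * ψ m t)
    (t : ℝ) :
    ψ (n - d₂ - 1) t
      = ∑ b : Fin (d₂ + 1), (winL d₂ n Q b).eval (t : ℂ) * ψ (n - d₂ + (b : ℕ)) t := by
  have hq : Q (n - 1) (n - d₂ - 1) ≠ 0 := by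
    have := hQsub (n - 1) (by omega)
    have e : n - 1 - d₂ = n - d₂ - 1 := by omega
    rwa [e] at this
  have key : (t : ℂ) * ψ (n - 1) t
      = (∑ s : Fin (d₂ + 1), Q (n - 1) (n - d₂ + (s : ℕ)) * ψ (n - d₂ + (s : ℕ)) t)
        + Q (n - 1) (n - d₂ - 1) * ψ (n - d₂ - 1) t := by
    rw [hrec (n - 1) t, band_sum d₂ Q hQband ψ (n - 1) (by omega) t,
      Finset.sum_range_succ']
    congr 1
    · rw [Finset.sum_range]
      apply Finset.sum_congr rfl
      intro s _
      have e : n - 1 - d₂ + ((s : ℕ) + 1) = n - d₂ + (s : ℕ) := by omega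
      rw [e]
    · have e : n - 1 - d₂ + 0 = n - d₂ - 1 := by omega
      rw [e]
  have heval : ∀ b : Fin (d₂ + 1), (winL d₂ n Q b).eval (t : ℂ)
      = (Q (n - 1) (n - d₂ - 1))⁻¹ *
          ((if (b : ℕ) = d₂ - 1 then (t : ℂ) else 0) - Q (n - 1) (n - d₂ + (b : ℕ))) := by
    intro b
    simp [winL, apply_ite (Polynomial.eval (t : ℂ))]
  have hcancel : ∀ x y : ℂ,
      Q (n - 1) (n - d₂ - 1) * ((Q (n - 1) (n - d₂ - 1))⁻¹ * x * y) = x * y := by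
    intro x y
    rw [← mul_assoc, ← mul_assoc, mul_inv_cancel₀ hq, one_mul]
  have hite : (∑ b : Fin (d₂ + 1),
      (if (b : ℕ) = d₂ - 1 then (t : ℂ) else 0) * ψ (n - d₂ + (b : ℕ)) t)
        = (t : ℂ) * ψ (n - 1) t := by
    have hbi : ∀ b : Fin (d₂ + 1),
        (if (b : ℕ) = d₂ - 1 then (t : ℂ) else 0)
          = if b = (⟨d₂ - 1, by omega⟩ : Fin (d₂ + 1)) then (t : ℂ) else 0 := by
      intro b
      by_cases hb : (b : ℕ) = d₂ - 1
      · simp [hb, Fin.ext_iff]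
      · simp [hb, Fin.ext_iff]
    simp only [hbi, ite_mul, zero_mul, Finset.sum_ite_eq', Finset.mem_univ, if_true]
    have e : n - d₂ + (d₂ - 1) = n - 1 := by omega
    simp [e]
  apply mul_left_cancel₀ hq
  have step1 : Q (n - 1) (n - d₂ - 1) * ψ (n - d₂ - 1) t
      = (t : ℂ) * ψ (n - 1) t
        - ∑ s : Fin (d₂ + 1), Q (n - 1) (n - d₂ + (s : ℕ)) * ψ (n - d₂ + (s : ℕ)) t := by
    linear_combination -key
  rw [step1]
  conv_rhs => rw [Finset.mul_sum]
  simp only [heval, hcancel, sub_mul, Finset.sum_sub_distrib, hite]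

noncomputable def winW (d₂ n : ℕ) (Q : ℕ → ℕ → ℂ) (i : ℕ) : Fin (d₂ + 1) → Polynomial ℂ :=
  if n - d₂ ≤ i then winV d₂ n Q (i - (n - d₂))
  else if i + 1 = n - d₂ then winL d₂ n Q
  else 0

theorem finite_differential_system_for_window
    (d₁ d₂ : ℕ) (hd₁ : 1 ≤ d₁) (hd₂ : 1 ≤ d₂)
    (c : ℂ) (hc : c ≠ 0)
    (Q : ℕ → ℕ → ℂ) (hQband : ∀ i j, (i + 1 < j ∨ j + d₂ < i) → Q i j = 0)
    (P : ℕ → ℕ → ℂ) (hPband : ∀ i j, (i + 1 < j ∨ j + d₁ < i) → P i j = 0)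
    (hQsup : ∀ m, Q m (m + 1) ≠ 0)
    (hQsub : ∀ m, d₂ ≤ m → Q m (m - d₂) ≠ 0)
    (n : ℕ) (hn : d₂ + 1 ≤ n) :
    ∃ D : Matrix (Fin (d₂ + 1)) (Fin (d₂ + 1)) (Polynomial ℂ),
      (∀ a b, (D a b).natDegree ≤ d₁) ∧
      ∀ ψ : ℕ → ℝ → ℂ,
        (∀ j, Differentiable ℝ (ψ j)) →
        (∀ j (t : ℝ), (t : ℂ) * ψ j t = ∑ m ∈ Finset.range (j + 2), Q j m * ψ m t) →
        (∀ j (t : ℝ), -c * deriv (ψ j) t = ∑ i ∈ Finset.range (j + d₁ + 1), P i j * ψ i t) →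
        ∀ (t : ℝ) (a : Fin (d₂ + 1)),
          -c * deriv (ψ (n - d₂ + (a : ℕ))) t =
            ∑ b : Fin (d₂ + 1), (D a b).eval (t : ℂ) * ψ (n - d₂ + (b : ℕ)) t := by
  refine ⟨fun a b => ∑ i ∈ Finset.range (n - d₂ + (a : ℕ) + d₁ + 1),
      Polynomial.C (P i (n - d₂ + (a : ℕ))) * winW d₂ n Q i b, ?_, ?_⟩
  · intro a b
    apply Polynomial.natDegree_sum_le_of_forall_le
    intro i hi
    refine le_trans (Polynomial.natDegree_C_mul_le _ _) ?_
    rw [winW]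
    split_ifs with h1 h2
    · have := winV_natDegree d₂ n Q (i - (n - d₂)) b
      simp only [Finset.mem_range] at hi
      have ha := a.isLt
      omega
    · exact le_trans (winL_natDegree d₂ n Q b) hd₁
    · simp
  · intro ψ hdiff hrec hder t a
    rw [hder (n - d₂ + (a : ℕ)) t]
    have hterm : ∀ i ∈ Finset.range (n - d₂ + (a : ℕ) + d₁ + 1),
        P i (n - d₂ + (a : ℕ)) * ψ i t
          = ∑ b : Fin (d₂ + 1),
              (Polynomial.C (P i (n - d₂ + (a : ℕ))) * winW d₂ n Q i b).eval (t : ℂ)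
                * ψ (n - d₂ + (b : ℕ)) t := by
      intro i hi
      by_cases hip : n - d₂ + (a : ℕ) ≤ i + 1
      · have hpsi : ψ i t
            = ∑ b : Fin (d₂ + 1), (winW d₂ n Q i b).eval (t : ℂ) * ψ (n - d₂ + (b : ℕ)) t := by
          by_cases hlo : n - d₂ ≤ i
          · have hv := winV_spec d₂ n Q hn hQband hQsup ψ hrec (i - (n - d₂)) t
            have e : n - d₂ + (i - (n - d₂)) = i := by omega
            rw [e] at hv
            rw [hv]
            apply Finset.sum_congr rfl
            intro b _
            rw [winW, if_pos hlo]
          · have hieq : i + 1 = n - d₂ := by omega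
            have hl := winL_spec d₂ n Q hd₂ hn hQband hQsub ψ hrec t
            have e : n - d₂ - 1 = i := by omega
            rw [e] at hl
            rw [hl]
            apply Finset.sum_congr rfl
            intro b _
            rw [winW, if_neg hlo, if_pos hieq]
        rw [hpsi, Finset.mul_sum]
        apply Finset.sum_congr rfl
        intro b _
        simp only [Polynomial.eval_mul, Polynomial.eval_C]
        ring
      · have h0 : P i (n - d₂ + (a : ℕ)) = 0 := hPband i _ (Or.inl (by omega))
        simp [h0]
    rw [Finset.sum_congr rfl hterm, Finset.sum_comm]
    apply Finset.sum_congr rfl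
    intro b _
    rw [Polynomial.eval_finset_sum, Finset.sum_mul]
end
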